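/- arXiv:1212.6560 — 4 statements merged into one kernel-verified Lean document; each statement's English description precedes it below -/
import Mathlib

section
/- Let a, b, c ∈ ℝ³ be mutually orthogonal vectors of the same (positive) magnitude, i.e. ⟨a,b⟩ = ⟨a,c⟩ = ⟨b,c⟩ = 0, ‖a‖ = ‖b‖ = ‖c‖ > 0, and suppose ⟨a × b, c⟩ > 0. Then there exists a spinor φ = (φ₁, φ₂) ∈ ℂ² such that a + ib = (φ₁² − φ₂², i(φ₁² + φ₂²), −2φ₁φ₂) and c = (φ₁·conj(φ₂) + conj(φ₁)·φ₂, i(conj(φ₂)φ₁ − conj(φ₁)φ₂), |φ₁|² − |φ₂|²). -/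
/-!
Since `a ⬝ a = b ⬝ b` and `a ⬝ b = 0`, the complex vector `z = a + i b` is isotropic,
`z ⬝ z = 0`, and every isotropic vector of `ℂ³` is `(φ₁² − φ₂², i(φ₁² + φ₂²), −2φ₁φ₂)`
for some spinor: take square roots of `φ₁² = (z₀ − i z₁)/2` and `φ₂² = (−z₀ − i z₁)/2`,
which forces `(φ₁φ₂)² = (z₂/2)²`, and fix the sign of `φ₂`. A direct computation gives
`a × b = (|φ₁|² + |φ₂|²) c(φ)`, with `c(φ)` the vector the spinor assigns to `c`, and
`|a| = |φ₁|² + |φ₂|²`. On the other hand a positively oriented orthogonal triad of common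
length `r` satisfies `a × b = r c`: the vector triple product gives `(a × b) × c = 0`, and
lengths and orientation fix the factor. Hence `c = c(φ)`.
-/

open Complex Matrix ComplexConjugate

theorem cross_eq_smul_of_orthogonal_triad {R : Type*} [CommRing R] [LinearOrder R]
    [IsStrictOrderedRing R] {a b c : Fin 3 → R}
    (hab : a ⬝ᵥ b = 0) (hac : a ⬝ᵥ c = 0) (hbc : b ⬝ᵥ c = 0)
    (hnorm_ab : a ⬝ᵥ a = b ⬝ᵥ b) (hnorm_bc : b ⬝ᵥ b = c ⬝ᵥ c)
    (horient : 0 < a ⨯₃ b ⬝ᵥ c) {r : R} (hr : 0 ≤ r) (hr2 : r ^ 2 = a ⬝ᵥ a) :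
    a ⨯₃ b = r • c := by
  have hcross : a ⨯₃ b ⨯₃ c = 0 := by
    rw [cross_cross_eq_smul_sub_smul, hac, hbc, zero_smul, zero_smul, sub_self]
  have hnorm_cross : a ⨯₃ b ⬝ᵥ a ⨯₃ b = (r ^ 2) ^ 2 := by
    rw [cross_dot_cross, hab, ← hnorm_ab, hr2]; ring
  have htriple : a ⨯₃ b ⬝ᵥ c = r ^ 3 := by
    have h := cross_dot_cross (a ⨯₃ b) c (a ⨯₃ b) c
    rw [hcross, zero_dotProduct, hnorm_cross, dotProduct_comm c (a ⨯₃ b), ← hnorm_bc,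
      ← hnorm_ab, ← hr2] at h
    exact (pow_left_inj₀ horient.le (by positivity) two_ne_zero).1 (by linear_combination h)
  rw [← sub_eq_zero, ← dotProduct_self_eq_zero]
  simp only [sub_dotProduct, dotProduct_sub, smul_dotProduct, dotProduct_smul, smul_eq_mul,
    dotProduct_comm c, htriple, hnorm_cross, ← hnorm_bc, ← hnorm_ab, ← hr2]
  ring

theorem dotProduct_self_ofReal_add_I_mul {n : Type*} [Fintype n] (a b : n → ℝ) :
    (fun i ↦ (a i : ℂ) + I * b i) ⬝ᵥ (fun i ↦ (a i : ℂ) + I * b i) =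
      ((a ⬝ᵥ a - b ⬝ᵥ b : ℝ) : ℂ) + 2 * I * (a ⬝ᵥ b : ℝ) := by
  simp only [dotProduct, ofReal_sub, ofReal_sum, ofReal_mul, Finset.mul_sum,
    ← Finset.sum_sub_distrib, ← Finset.sum_add_distrib]
  refine Finset.sum_congr rfl fun i _ ↦ ?_
  linear_combination (b i : ℂ) ^ 2 * I_sq

def spinorNullVector (φ₁ φ₂ : ℂ) : Fin 3 → ℂ :=
  ![φ₁ ^ 2 - φ₂ ^ 2, I * (φ₁ ^ 2 + φ₂ ^ 2), -2 * φ₁ * φ₂]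

noncomputable def spinorAxis (φ₁ φ₂ : ℂ) : Fin 3 → ℝ :=
  ![2 * (φ₁ * conj φ₂).re, -2 * (φ₁ * conj φ₂).im, ‖φ₁‖ ^ 2 - ‖φ₂‖ ^ 2]

theorem exists_spinorNullVector_eq {z : Fin 3 → ℂ} (hz : z ⬝ᵥ z = 0) :
    ∃ φ₁ φ₂, spinorNullVector φ₁ φ₂ = z := by
  obtain ⟨φ₁, hφ₁⟩ := IsAlgClosed.exists_pow_nat_eq ((z 0 - I * z 1) / 2) two_pos
  obtain ⟨ψ, hψ⟩ := IsAlgClosed.exists_pow_nat_eq ((-z 0 - I * z 1) / 2) two_pos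
  have hz' : z 0 ^ 2 + z 1 ^ 2 + z 2 ^ 2 = 0 := by
    simpa only [vec3_dotProduct, sq] using hz
  have hprod_sq : (φ₁ * ψ) ^ 2 = (-z 2 / 2) ^ 2 := by
    linear_combination (mul_pow φ₁ ψ 2).trans (by rw [hφ₁, hψ]) - hz' / 4 + z 1 ^ 2 / 4 * I_sq
  obtain ⟨φ₂, hφ₂, hprod⟩ : ∃ φ₂, φ₂ ^ 2 = (-z 0 - I * z 1) / 2 ∧ φ₁ * φ₂ = -z 2 / 2 := by
    rcases sq_eq_sq_iff_eq_or_eq_neg.1 hprod_sq with h | h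
    · exact ⟨ψ, hψ, h⟩
    · exact ⟨-ψ, by rw [neg_sq, hψ], by linear_combination -h⟩
  refine ⟨φ₁, φ₂, funext fun i ↦ ?_⟩
  fin_cases i
  · show φ₁ ^ 2 - φ₂ ^ 2 = z 0
    linear_combination hφ₁ - hφ₂
  · show I * (φ₁ ^ 2 + φ₂ ^ 2) = z 1
    linear_combination I * hφ₁ + I * hφ₂ - z 1 * I_sq
  · show -2 * φ₁ * φ₂ = z 2
    linear_combination -2 * hprod

theorem spinorNullVector_re_cross_im (φ₁ φ₂ : ℂ) :
    (fun i ↦ (spinorNullVector φ₁ φ₂ i).re) ⨯₃ (fun i ↦ (spinorNullVector φ₁ φ₂ i).im) =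
      (‖φ₁‖ ^ 2 + ‖φ₂‖ ^ 2) • spinorAxis φ₁ φ₂ := by
  ext i
  simp only [spinorAxis, Complex.sq_norm, normSq_apply]
  fin_cases i <;>
  · simp [spinorNullVector, cross_apply, sq]
    ring

theorem spinorNullVector_re_dot_re (φ₁ φ₂ : ℂ) :
    (fun i ↦ (spinorNullVector φ₁ φ₂ i).re) ⬝ᵥ (fun i ↦ (spinorNullVector φ₁ φ₂ i).re) =
      (‖φ₁‖ ^ 2 + ‖φ₂‖ ^ 2) ^ 2 := by
  simp only [Complex.sq_norm, normSq_apply]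
  simp [spinorNullVector, vec3_dotProduct, sq]
  ring

theorem ofReal_spinorAxis (φ₁ φ₂ : ℂ) (i : Fin 3) :
    (spinorAxis φ₁ φ₂ i : ℂ) =
      ![φ₁ * conj φ₂ + conj φ₁ * φ₂, I * (conj φ₂ * φ₁ - conj φ₁ * φ₂),
        ((‖φ₁‖ ^ 2 - ‖φ₂‖ ^ 2 : ℝ) : ℂ)] i := by
  fin_cases i <;> apply Complex.ext <;> simp [spinorAxis] <;> ring

theorem exists_spinor_of_orthogonal_triad_general (a b c : Fin 3 → ℝ)
    (hab : dotProduct a b = 0)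
    (hac : dotProduct a c = 0)
    (hbc : dotProduct b c = 0)
    (hnorm_ab : dotProduct a a = dotProduct b b)
    (hnorm_bc : dotProduct b b = dotProduct c c)
    (horient : 0 < dotProduct (crossProduct a b) c) :
    ∃ φ₁ φ₂ : ℂ,
      (∀ i, (a i : ℂ) + Complex.I * (b i : ℂ) =
        ![φ₁ ^ 2 - φ₂ ^ 2, Complex.I * (φ₁ ^ 2 + φ₂ ^ 2), -2 * φ₁ * φ₂] i) ∧
      (∀ i, (c i : ℂ) =
        ![φ₁ * (starRingEnd ℂ) φ₂ + (starRingEnd ℂ) φ₁ * φ₂,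
          Complex.I * ((starRingEnd ℂ) φ₂ * φ₁ - (starRingEnd ℂ) φ₁ * φ₂),
          ((‖φ₁‖ ^ 2 - ‖φ₂‖ ^ 2 : ℝ) : ℂ)] i) := by
  obtain ⟨φ₁, φ₂, hφ⟩ := exists_spinorNullVector_eq (z := fun i ↦ (a i : ℂ) + I * b i)
    (by rw [dotProduct_self_ofReal_add_I_mul, hab, hnorm_ab]; simp)
  have ha : (fun i ↦ (spinorNullVector φ₁ φ₂ i).re) = a := by ext i; simp [hφ]
  have hb : (fun i ↦ (spinorNullVector φ₁ φ₂ i).im) = b := by ext i; simp [hφ]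
  set N := ‖φ₁‖ ^ 2 + ‖φ₂‖ ^ 2
  have hcross_axis : a ⨯₃ b = N • spinorAxis φ₁ φ₂ := ha ▸ hb ▸ spinorNullVector_re_cross_im φ₁ φ₂
  have hcross_c : a ⨯₃ b = N • c :=
    cross_eq_smul_of_orthogonal_triad hab hac hbc hnorm_ab hnorm_bc horient (by positivity)
      (ha ▸ spinorNullVector_re_dot_re φ₁ φ₂).symm
  have hN : N ≠ 0 := by
    rintro hN
    rw [hcross_c, hN, zero_smul, zero_dotProduct] at horient
    exact horient.false
  have hc : c = spinorAxis φ₁ φ₂ := smul_right_injective _ hN (hcross_c.symm.trans hcross_axis)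
  exact ⟨φ₁, φ₂, fun i ↦ (congrFun hφ i).symm, fun i ↦ by rw [hc, ofReal_spinorAxis]⟩

/-- If `a, b, c ∈ ℝ³` are mutually orthogonal vectors of the same
positive magnitude with `⟨a × b, c⟩ > 0`, then there exists a spinor
`φ = (φ₁, φ₂) ∈ ℂ²` with `a + ib = (φ₁² − φ₂², i(φ₁² + φ₂²), −2φ₁φ₂)` and
`c = (φ₁·conj φ₂ + conj φ₁·φ₂, i(conj φ₂·φ₁ − conj φ₁·φ₂), |φ₁|² − |φ₂|²)`. -/
theorem exists_spinor_of_orthogonal_triad (a b c : Fin 3 → ℝ)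
    (hab : dotProduct a b = 0)
    (hac : dotProduct a c = 0)
    (hbc : dotProduct b c = 0)
    (hnorm_ab : dotProduct a a = dotProduct b b)
    (hnorm_bc : dotProduct b b = dotProduct c c)
    (hpos : 0 < dotProduct a a)
    (horient : 0 < dotProduct (crossProduct a b) c) :
    ∃ φ₁ φ₂ : ℂ,
      (∀ i, (a i : ℂ) + Complex.I * (b i : ℂ) =
        ![φ₁ ^ 2 - φ₂ ^ 2, Complex.I * (φ₁ ^ 2 + φ₂ ^ 2), -2 * φ₁ * φ₂] i) ∧
      (∀ i, (c i : ℂ) =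
        ![φ₁ * (starRingEnd ℂ) φ₂ + (starRingEnd ℂ) φ₁ * φ₂,
          Complex.I * ((starRingEnd ℂ) φ₂ * φ₁ - (starRingEnd ℂ) φ₁ * φ₂),
          ((‖φ₁‖ ^ 2 - ‖φ₂‖ ^ 2 : ℝ) : ℂ)] i) :=
  exists_spinor_of_orthogonal_triad_general a b c hab hac hbc hnorm_ab hnorm_bc horient
end

section
/- Let φ, ψ ∈ ℂ² be spinors producing the same associated vectors, i.e. φ₁² − φ₂² = ψ₁² − ψ₂², φ₁² + φ₂² = ψ₁² + ψ₂², φ₁φ₂ = ψ₁ψ₂, φ₁·conj(φ₂) + conj(φ₁)·φ₂ = ψ₁·conj(ψ₂) + conj(ψ₁)·ψ₂, conj(φ₂)φ₁ − conj(φ₁)φ₂ = conj(ψ₂)ψ₁ − conj(ψ₁)ψ₂, and |φ₁|² − |φ₂|² = |ψ₁|² − |ψ₂|². If φ ≠ 0, then ψ = φ or ψ = −φ. (The correspondence between spinors and ordered orthonormal triads is two-to-one.) -/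
/-! Sum and difference of the first two equations give `ψ₁² = φ₁²` and `ψ₂² = φ₂²`, so each
component of `ψ` is `±` that of `φ`; the product equation `ψ₁ψ₂ = φ₁φ₂` forbids independent signs
unless a component vanishes, and then its sign does not matter. -/

theorem eq_zero_of_two_mul_eq_zero {R : Type*} [CommRing R] [NoZeroDivisors R]
    [NeZero (2 : R)] {x : R} (h : 2 * x = 0) : x = 0 :=
  (mul_eq_zero.1 h).resolve_left two_ne_zero

theorem eq_and_eq_or_eq_neg_and_eq_neg_of_sq_eq_sq_of_mul_eq {R : Type*} [CommRing R]
    [NoZeroDivisors R] [NeZero (2 : R)] {a b c d : R}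
    (hc : c ^ 2 = a ^ 2) (hd : d ^ 2 = b ^ 2) (hcd : c * d = a * b) :
    (c = a ∧ d = b) ∨ (c = -a ∧ d = -b) := by
  rcases sq_eq_sq_iff_eq_or_eq_neg.1 hc with rfl | rfl <;>
    rcases sq_eq_sq_iff_eq_or_eq_neg.1 hd with rfl | rfl
  · exact .inl ⟨rfl, rfl⟩
  · have hcb : 2 * (c * b) = 0 := by linear_combination -hcd
    rcases mul_eq_zero.1 (eq_zero_of_two_mul_eq_zero hcb) with rfl | rfl
    · exact .inr ⟨neg_zero.symm, rfl⟩
    · exact .inl ⟨rfl, neg_zero⟩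
  · have had : 2 * (a * d) = 0 := by linear_combination -hcd
    rcases mul_eq_zero.1 (eq_zero_of_two_mul_eq_zero had) with rfl | rfl
    · exact .inl ⟨neg_zero, rfl⟩
    · exact .inr ⟨rfl, neg_zero.symm⟩
  · exact .inr ⟨rfl, rfl⟩

theorem spinor_two_to_one_general (φ₁ φ₂ ψ₁ ψ₂ : ℂ)
    (h1 : φ₁ ^ 2 - φ₂ ^ 2 = ψ₁ ^ 2 - ψ₂ ^ 2)
    (h2 : φ₁ ^ 2 + φ₂ ^ 2 = ψ₁ ^ 2 + ψ₂ ^ 2)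
    (h3 : φ₁ * φ₂ = ψ₁ * ψ₂) :
    (ψ₁ = φ₁ ∧ ψ₂ = φ₂) ∨ (ψ₁ = -φ₁ ∧ ψ₂ = -φ₂) := by
  have hsq₁ : ψ₁ ^ 2 = φ₁ ^ 2 := by linear_combination -(h1 + h2) / 2
  have hsq₂ : ψ₂ ^ 2 = φ₂ ^ 2 := by linear_combination (h1 - h2) / 2
  exact eq_and_eq_or_eq_neg_and_eq_neg_of_sq_eq_sq_of_mul_eq hsq₁ hsq₂ h3.symm

/-- Two spinors producing the same associated ordered triad of
vectors agree up to sign: the correspondence between spinors and ordered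
orthonormal triads is two-to-one. -/
theorem spinor_two_to_one (φ₁ φ₂ ψ₁ ψ₂ : ℂ)
    (h1 : φ₁ ^ 2 - φ₂ ^ 2 = ψ₁ ^ 2 - ψ₂ ^ 2)
    (h2 : φ₁ ^ 2 + φ₂ ^ 2 = ψ₁ ^ 2 + ψ₂ ^ 2)
    (h3 : φ₁ * φ₂ = ψ₁ * ψ₂)
    (h4 : φ₁ * (starRingEnd ℂ) φ₂ + (starRingEnd ℂ) φ₁ * φ₂ =
          ψ₁ * (starRingEnd ℂ) ψ₂ + (starRingEnd ℂ) ψ₁ * ψ₂)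
    (h5 : (starRingEnd ℂ) φ₂ * φ₁ - (starRingEnd ℂ) φ₁ * φ₂ =
          (starRingEnd ℂ) ψ₂ * ψ₁ - (starRingEnd ℂ) ψ₁ * ψ₂)
    (h6 : ‖φ₁‖ ^ 2 - ‖φ₂‖ ^ 2 =
          ‖ψ₁‖ ^ 2 - ‖ψ₂‖ ^ 2)
    (hne : ¬(φ₁ = 0 ∧ φ₂ = 0)) :
    (ψ₁ = φ₁ ∧ ψ₂ = φ₂) ∨ (ψ₁ = -φ₁ ∧ ψ₂ = -φ₂) :=
  spinor_two_to_one_general φ₁ φ₂ ψ₁ ψ₂ h1 h2 h3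
end

section
/- Let φ : ℝ → ℂ² be a differentiable curve of unit spinors (conj(φ(s))ᵗφ(s) = 1 for all s), let κ, μ : ℝ → ℝ be functions, and define T, N, B : ℝ → ℝ³ by N(s) + iB(s) = φ(s)ᵗσφ(s) = (φ₁² − φ₂², i(φ₁² + φ₂²), −2φ₁φ₂) (componentwise real and imaginary parts) and T(s) = −φ̂(s)ᵗσφ(s) = (φ₁·conj(φ₂) + conj(φ₁)·φ₂, i(conj(φ₂)φ₁ − conj(φ₁)φ₂), |φ₁|² − |φ₂|²). Then the Frenet-type equations T′ = κN, N′ = −κT + μB, B′ = −μN hold for all s if and only if the single spinor equation φ′(s) = −i(μ(s)/2)·φ(s) + (κ(s)/2)·φ̂(s) holds for all s. (Applied to an arc-length curve in a three-dimensional Lie group G with bi-invariant metric, with μ = τ − τ_G, this is the spinor form of the Frenet equations in G.) -/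
/-!
Write `Z = N + iB = φᵗσφ` and `T = −φ̂ᵗσφ`. Since `σ` is symmetric, `Z′ = 2φᵗσφ′`,
while `−iμZ − κT = 2φᵗσF` for `F = −i(μ/2)φ + (κ/2)φ̂`; so the normal and binormal
equations together say `φᵗσ(φ′ − F) = 0`. The components of `uᵗσv` are, up to an
invertible change of coordinates, the coefficients of the product of the linear forms
`u₁x + u₂y` and `v₁x + v₂y`, so for `φ ≠ 0` this vanishes exactly when `φ′ = F`.
Conversely, if `φ′ = F` then `φ̂′ = i(μ/2)φ̂ − (κ/2)φ`, and differentiating `T` gives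
`T′ = (κ/2)(Z + Z̄) = κN`.
-/

open Complex ComplexConjugate

lemma HasDerivAt.re {z : ℝ → ℂ} {z' : ℂ} {s : ℝ} (h : HasDerivAt z z' s) :
    HasDerivAt (fun t => (z t).re) z'.re s :=
  reCLM.hasFDerivAt.comp_hasDerivAt s h

lemma HasDerivAt.im {z : ℝ → ℂ} {z' : ℂ} {s : ℝ} (h : HasDerivAt z z' s) :
    HasDerivAt (fun t => (z t).im) z'.im s :=
  imCLM.hasFDerivAt.comp_hasDerivAt s h

lemma hasDerivAt_of_ofReal_eq {x : ℝ → ℝ} {z : ℝ → ℂ} {z' : ℂ} {s : ℝ}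
    (hz : ∀ t, (x t : ℂ) = z t) (h : HasDerivAt z z' s) : HasDerivAt x z'.re s := by
  have hx : x = fun t => (z t).re := funext fun t => by simp [← hz]
  exact hx ▸ h.re

lemma deriv_eq_and_deriv_eq_iff {x y : ℝ → ℝ} {z : ℝ → ℂ} {z' : ℂ} {s a b : ℝ}
    (hz : ∀ t, (x t : ℂ) + I * y t = z t) (h : HasDerivAt z z' s) :
    deriv x s = a ∧ deriv y s = b ↔ z' = a + I * b := by
  have hx : x = fun t => (z t).re := funext fun t => by simp [← hz]
  have hy : y = fun t => (z t).im := funext fun t => by simp [← hz]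
  rw [hx, hy, h.re.deriv, h.im.deriv]
  simp [Complex.ext_iff]

namespace Spinor

/-- `sigmaForm u v = uᵗσv` for the triple `σ = (σ₁, σ₂, σ₃)`. -/
def sigmaForm (u v : ℂ × ℂ) : Fin 3 → ℂ :=
  ![u.1 * v.1 - u.2 * v.2, I * (u.1 * v.1 + u.2 * v.2), -(u.1 * v.2 + u.2 * v.1)]

def mate (u : ℂ × ℂ) : ℂ × ℂ := (-conj u.2, conj u.1)

/-- The right-hand side `−i(μ/2)φ + (κ/2)φ̂` of the spinor Frenet equation. -/
noncomputable def frenetDeriv (κ μ : ℝ) (u : ℂ × ℂ) : ℂ × ℂ :=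
  (-I * (μ / 2)) • u + ((κ : ℂ) / 2) • mate u

lemma sigmaForm_eq_zero_iff {u v : ℂ × ℂ} : sigmaForm u v = 0 ↔ u = 0 ∨ v = 0 := by
  obtain ⟨p, q⟩ := u
  obtain ⟨a, b⟩ := v
  simp only [Prod.mk_eq_zero]
  constructor
  · intro h
    have h0 : p * a - q * b = 0 := congrFun h 0
    have h1 : I * (p * a + q * b) = 0 := congrFun h 1
    have h2 : -(p * b + q * a) = 0 := congrFun h 2
    have hpa : p * a = 0 := by
      linear_combination h0 / 2 - I * h1 / 2 + (p * a + q * b) / 2 * I_sq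
    have hqb : q * b = 0 := by
      linear_combination -h0 / 2 - I * h1 / 2 + (p * a + q * b) / 2 * I_sq
    by_cases hp : p = 0
    · by_cases hq : q = 0
      · exact .inl ⟨hp, hq⟩
      · refine .inr ⟨?_, (mul_eq_zero.1 hqb).resolve_left hq⟩
        exact (mul_eq_zero.1 (by simpa [hp] using h2 : q * a = 0)).resolve_left hq
    · have ha : a = 0 := (mul_eq_zero.1 hpa).resolve_left hp
      exact .inr ⟨ha, (mul_eq_zero.1 (by simpa [ha] using h2 : p * b = 0)).resolve_left hp⟩
  · rintro (⟨rfl, rfl⟩ | ⟨rfl, rfl⟩) <;> ext i <;> fin_cases i <;> simp [sigmaForm]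

lemma sigmaForm_self (p q : ℂ) :
    sigmaForm (p, q) (p, q) = ![p ^ 2 - q ^ 2, I * (p ^ 2 + q ^ 2), -2 * p * q] := by
  ext i; fin_cases i <;> simp [sigmaForm] <;> ring

lemma neg_sigmaForm_mate_self (p q : ℂ) :
    -sigmaForm (mate (p, q)) (p, q) = ![p * conj q + conj p * q,
      I * (conj q * p - conj p * q), ((‖p‖ ^ 2 - ‖q‖ ^ 2 : ℝ) : ℂ)] := by
  ext i; fin_cases i <;> simp [sigmaForm, mate, ← Complex.mul_conj'] <;> ring

lemma sigmaForm_add_sigmaForm_sub_eq_two_mul (κ μ : ℝ) (u u' : ℂ × ℂ) (i : Fin 3) :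
    sigmaForm u' u i + sigmaForm u u' i
        - (-I * μ * sigmaForm u u i - κ * -sigmaForm (mate u) u i) =
      2 * sigmaForm u (u' - frenetDeriv κ μ u) i := by
  fin_cases i <;> simp [sigmaForm, mate, frenetDeriv] <;> ring

lemma neg_add_sigmaForm_mate_frenetDeriv (κ μ : ℝ) (u : ℂ × ℂ) (i : Fin 3) :
    -(sigmaForm (mate (frenetDeriv κ μ u)) u i + sigmaForm (mate u) (frenetDeriv κ μ u) i) =
      κ * (sigmaForm u u i).re := by
  rw [Complex.re_eq_add_conj]
  fin_cases i <;> simp [sigmaForm, mate, frenetDeriv, map_ofNat] <;> ring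

variable {u v : ℝ → ℂ × ℂ} {u' v' : ℂ × ℂ} {s : ℝ}

lemma hasDerivAt_sigmaForm (hu : HasDerivAt u u' s) (hv : HasDerivAt v v' s) (i : Fin 3) :
    HasDerivAt (fun t => sigmaForm (u t) (v t) i)
      (sigmaForm u' (v s) i + sigmaForm (u s) v' i) s := by
  have hu₁ := (ContinuousLinearMap.fst ℝ ℂ ℂ).hasFDerivAt.comp_hasDerivAt s hu
  have hu₂ := (ContinuousLinearMap.snd ℝ ℂ ℂ).hasFDerivAt.comp_hasDerivAt s hu
  have hv₁ := (ContinuousLinearMap.fst ℝ ℂ ℂ).hasFDerivAt.comp_hasDerivAt s hv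
  have hv₂ := (ContinuousLinearMap.snd ℝ ℂ ℂ).hasFDerivAt.comp_hasDerivAt s hv
  simp only [Function.comp_def, ContinuousLinearMap.coe_fst', ContinuousLinearMap.coe_snd']
    at hu₁ hu₂ hv₁ hv₂
  fin_cases i
  · exact ((hu₁.mul hv₁).sub (hu₂.mul hv₂)).congr_deriv (by simp [sigmaForm]; ring)
  · exact (((hu₁.mul hv₁).add (hu₂.mul hv₂)).const_mul I).congr_deriv
      (by simp [sigmaForm]; ring)
  · exact ((hu₁.mul hv₂).add (hu₂.mul hv₁)).neg.congr_deriv (by simp [sigmaForm]; ring)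

lemma hasDerivAt_mate (hu : HasDerivAt u u' s) : HasDerivAt (fun t => mate (u t)) (mate u') s :=
  ((ContinuousLinearMap.snd ℝ ℂ ℂ).hasFDerivAt.comp_hasDerivAt s hu).star.neg.prodMk
    ((ContinuousLinearMap.fst ℝ ℂ ℂ).hasFDerivAt.comp_hasDerivAt s hu).star

variable {φ : ℝ → ℂ × ℂ} {φ' : ℂ × ℂ} {T N B : ℝ → Fin 3 → ℝ} {κ μ : ℝ}

lemma deriv_normal_binormal_iff (hφ : HasDerivAt φ φ' s) (hφs : φ s ≠ 0)
    (hNB : ∀ t i, (N t i : ℂ) + I * B t i = sigmaForm (φ t) (φ t) i)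
    (hT : ∀ t i, (T t i : ℂ) = -sigmaForm (mate (φ t)) (φ t) i) :
    (∀ i, deriv (fun t => N t i) s = -κ * T s i + μ * B s i ∧
      deriv (fun t => B t i) s = -μ * N s i) ↔ φ' = frenetDeriv κ μ (φ s) := by
  have key : ∀ i, (deriv (fun t => N t i) s = -κ * T s i + μ * B s i ∧
      deriv (fun t => B t i) s = -μ * N s i) ↔
        sigmaForm (φ s) (φ' - frenetDeriv κ μ (φ s)) i = 0 := fun i => by
    have hc : (((-κ * T s i + μ * B s i : ℝ)) : ℂ) + I * ((-μ * N s i : ℝ) : ℂ) =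
        -I * μ * sigmaForm (φ s) (φ s) i - κ * -sigmaForm (mate (φ s)) (φ s) i := by
      rw [← hNB, ← hT]; push_cast; linear_combination (μ * B s i : ℂ) * I_sq
    rw [deriv_eq_and_deriv_eq_iff (hNB · i) (hasDerivAt_sigmaForm hφ hφ i), hc, ← sub_eq_zero,
      sigmaForm_add_sigmaForm_sub_eq_two_mul, mul_eq_zero, or_iff_right two_ne_zero]
  simp only [key]
  rw [← sub_eq_zero, ← sigmaForm_eq_zero_iff.trans (or_iff_right hφs), funext_iff]
  rfl

lemma deriv_tangent_of_eq_frenetDeriv (hφ : HasDerivAt φ φ' s)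
    (hNB : ∀ t i, (N t i : ℂ) + I * B t i = sigmaForm (φ t) (φ t) i)
    (hT : ∀ t i, (T t i : ℂ) = -sigmaForm (mate (φ t)) (φ t) i)
    (h : φ' = frenetDeriv κ μ (φ s)) (i : Fin 3) :
    deriv (fun t => T t i) s = κ * N s i := by
  have hW := ((hasDerivAt_sigmaForm (hasDerivAt_mate hφ) hφ i).neg)
  rw [(hasDerivAt_of_ofReal_eq (hT · i) hW).deriv, h, neg_add_sigmaForm_mate_frenetDeriv,
    ← hNB]
  simp

theorem frenet_iff_eq_frenetDeriv (hφ : HasDerivAt φ φ' s) (hφs : φ s ≠ 0)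
    (hNB : ∀ t i, (N t i : ℂ) + I * B t i = sigmaForm (φ t) (φ t) i)
    (hT : ∀ t i, (T t i : ℂ) = -sigmaForm (mate (φ t)) (φ t) i) :
    ((∀ i, deriv (fun t => T t i) s = κ * N s i) ∧
      (∀ i, deriv (fun t => N t i) s = -κ * T s i + μ * B s i) ∧
      (∀ i, deriv (fun t => B t i) s = -μ * N s i)) ↔ φ' = frenetDeriv κ μ (φ s) := by
  rw [← forall_and, deriv_normal_binormal_iff hφ hφs hNB hT]
  exact ⟨And.right, fun h => ⟨deriv_tangent_of_eq_frenetDeriv hφ hNB hT h, h⟩⟩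

end Spinor

/-- Spinor form of the Frenet equations in a three-dimensional
Lie group with bi-invariant metric. Let `φ = (φ₁, φ₂) : ℝ → ℂ²` be a
differentiable curve of unit spinors encoding the triad `(N, B, T)` via
`N + iB = φᵗσφ` and `T = −φ̂ᵗσφ`. Then the Frenet-type equations
`T′ = κN`, `N′ = −κT + μB`, `B′ = −μN` (with `μ = τ − τ_G`) hold iff the
single spinor equation `φ′ = −i(μ/2)φ + (κ/2)φ̂` holds. -/
theorem spinor_frenet_lie_group (φ₁ φ₂ : ℝ → ℂ) (κ μ : ℝ → ℝ)
    (T N B : ℝ → Fin 3 → ℝ)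
    (hd₁ : Differentiable ℝ φ₁) (hd₂ : Differentiable ℝ φ₂)
    (hunit : ∀ s, (starRingEnd ℂ) (φ₁ s) * φ₁ s + (starRingEnd ℂ) (φ₂ s) * φ₂ s = 1)
    (hNB : ∀ s i, (N s i : ℂ) + Complex.I * (B s i : ℂ) =
      ![φ₁ s ^ 2 - φ₂ s ^ 2, Complex.I * (φ₁ s ^ 2 + φ₂ s ^ 2),
        -2 * φ₁ s * φ₂ s] i)
    (hT : ∀ s i, (T s i : ℂ) =
      ![φ₁ s * (starRingEnd ℂ) (φ₂ s) + (starRingEnd ℂ) (φ₁ s) * φ₂ s,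
        Complex.I * ((starRingEnd ℂ) (φ₂ s) * φ₁ s - (starRingEnd ℂ) (φ₁ s) * φ₂ s),
        ((‖φ₁ s‖ ^ 2 - ‖φ₂ s‖ ^ 2 : ℝ) : ℂ)] i) :
    ((∀ s i, deriv (fun t => T t i) s = κ s * N s i) ∧
     (∀ s i, deriv (fun t => N t i) s = -(κ s) * T s i + μ s * B s i) ∧
     (∀ s i, deriv (fun t => B t i) s = -(μ s) * N s i)) ↔
    ((∀ s, deriv φ₁ s =
        -Complex.I * (μ s / 2) * φ₁ s + (κ s / 2) * (-(starRingEnd ℂ) (φ₂ s))) ∧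
     (∀ s, deriv φ₂ s =
        -Complex.I * (μ s / 2) * φ₂ s + (κ s / 2) * ((starRingEnd ℂ) (φ₁ s)))) := by
  have hφ : ∀ s, HasDerivAt (fun t => (φ₁ t, φ₂ t)) (deriv φ₁ s, deriv φ₂ s) s :=
    fun s => (hd₁ s).hasDerivAt.prodMk (hd₂ s).hasDerivAt
  have hφ_ne : ∀ s, (φ₁ s, φ₂ s) ≠ 0 := fun s h0 => by
    simpa [(Prod.mk_eq_zero.1 h0).1, (Prod.mk_eq_zero.1 h0).2] using hunit s
  have hNB' : ∀ t i,
      (N t i : ℂ) + I * B t i = Spinor.sigmaForm (φ₁ t, φ₂ t) (φ₁ t, φ₂ t) i :=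
    fun t i => by rw [Spinor.sigmaForm_self]; exact hNB t i
  have hT' : ∀ t i,
      (T t i : ℂ) = -Spinor.sigmaForm (Spinor.mate (φ₁ t, φ₂ t)) (φ₁ t, φ₂ t) i :=
    fun t i => by rw [← Pi.neg_apply, Spinor.neg_sigmaForm_mate_self]; exact hT t i
  rw [← forall_and, ← forall_and, ← forall_and]
  refine forall_congr' fun s => ?_
  rw [Spinor.frenet_iff_eq_frenetDeriv (hφ s) (hφ_ne s) hNB' hT']
  simp [Spinor.frenetDeriv, Spinor.mate, Prod.ext_iff]
end

section
/- Let φ : ℝ → ℂ² be a differentiable curve of unit spinors (conj(φ(s))ᵗφ(s) = 1 for all s), let κ, τ : ℝ → ℝ be functions, and define T, N, B : ℝ → ℝ³ by N(s) + iB(s) = φ(s)ᵗσφ(s) and T(s) = −φ̂(s)ᵗσφ(s). Then the Frenet equations of an arc-length curve in an Abelian three-dimensional Lie group (where τ_G = 0), namely T′ = κN, N′ = −κT + τB, B′ = −τN, hold for all s if and only if φ′(s) = −i(τ(s)/2)·φ(s) + (κ(s)/2)·φ̂(s) for all s. This recovers the spinor Frenet equation of Del Castillo and Barrales in Euclidean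 3-space. -/
/-!
Write `Z = N + iB`. Since `κ`, `τ` and `T` are real, the Frenet equations for `N′` and `B′`
together say `Z′ = -κT - iτZ`. Differentiating `Z = φᵗσφ` gives `Z′ = 2β(φ, φ′)` for the
symmetric bilinear map `β((a, b), (u, v)) = (au - bv, i(au + bv), -(av + bu))`, and the
right-hand side `F(φ)` of the spinor equation satisfies `2β(φ, F(φ)) = -κT - iτZ`. So these two
Frenet equations say `β(φ, φ′ - F(φ)) = 0`. Up to an invertible change of coordinates, the
components of `β((a, b), (u, v))` are the coefficients of `(a + bX)(u + vX)`, so for `φ ≠ 0`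
this forces `φ′ = F(φ)`. Conversely, `φ′ = F(φ)` gives `T′ = κN` by a direct computation.
-/

section ComplexDeriv

open Complex

variable {f g : ℝ → ℝ} {h : ℝ → ℂ} {z : ℂ} {s : ℝ}

theorem hasDerivAt_of_ofReal_eq_s12 (hf : ∀ t, (f t : ℂ) = h t) (hh : HasDerivAt h z s) :
    HasDerivAt f z.re s := by
  have hf' : f = fun t => (h t).re := funext fun t => by simp [← hf t]
  exact hf' ▸ reCLM.hasFDerivAt.comp_hasDerivAt s hh

theorem hasDerivAt_of_add_I_mul_eq (hfg : ∀ t, (f t : ℂ) + I * g t = h t)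
    (hh : HasDerivAt h z s) : HasDerivAt f z.re s ∧ HasDerivAt g z.im s := by
  have hf : f = fun t => (h t).re := funext fun t => by simp [← hfg t]
  have hg : g = fun t => (h t).im := funext fun t => by simp [← hfg t]
  exact ⟨hf ▸ reCLM.hasFDerivAt.comp_hasDerivAt s hh,
    hg ▸ imCLM.hasFDerivAt.comp_hasDerivAt s hh⟩

end ComplexDeriv

theorem eq_zero_and_eq_zero_of_linear_mul_eq_zero {R : Type*} [NonUnitalNonAssocSemiring R]
    [NoZeroDivisors R] {a b u v : R} (hab : a ≠ 0 ∨ b ≠ 0) (hau : a * u = 0) (hbv : b * v = 0)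
    (h : b * u + a * v = 0) : u = 0 ∧ v = 0 := by
  rcases hab with ha | hb
  · obtain rfl : u = 0 := (mul_eq_zero.mp hau).resolve_left ha
    exact ⟨rfl, (mul_eq_zero.mp (by simpa using h)).resolve_left ha⟩
  · obtain rfl : v = 0 := (mul_eq_zero.mp hbv).resolve_left hb
    exact ⟨(mul_eq_zero.mp (by simpa using h)).resolve_left hb, rfl⟩

section SpinorFrame

open Complex ComplexConjugate

def spinorFrameNB (a b : ℂ) : Fin 3 → ℂ :=
  ![a ^ 2 - b ^ 2, I * (a ^ 2 + b ^ 2), -2 * a * b]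

noncomputable def spinorFrameT (a b : ℂ) : Fin 3 → ℂ :=
  ![a * conj b + conj a * b, I * (conj b * a - conj a * b), ((‖a‖ ^ 2 - ‖b‖ ^ 2 : ℝ) : ℂ)]

def spinorFrameNBDeriv (a b a' b' : ℂ) : Fin 3 → ℂ :=
  ![2 * (a * a' - b * b'), 2 * I * (a * a' + b * b'), -2 * (a' * b + a * b')]

def spinorFrameTDeriv (a b a' b' : ℂ) : Fin 3 → ℂ :=
  ![a' * conj b + a * conj b' + (conj a' * b + conj a * b'),
    I * (conj b' * a + conj b * a' - (conj a' * b + conj a * b')),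
    conj a' * a + conj a * a' - (conj b' * b + conj b * b')]

noncomputable def spinorFrenet (κ τ : ℝ) (a b : ℂ) : ℂ × ℂ :=
  (-I * (τ / 2) * a + κ / 2 * -conj b, -I * (τ / 2) * b + κ / 2 * conj a)

theorem spinorFrameT_two (a b : ℂ) : spinorFrameT a b 2 = conj a * a - conj b * b := by
  simp [spinorFrameT, ← normSq_eq_conj_mul_self, normSq_eq_norm_sq]

section Deriv

variable {φ₁ φ₂ : ℝ → ℂ} {a' b' : ℂ} {s : ℝ}

theorem hasDerivAt_spinorFrameNB (h₁ : HasDerivAt φ₁ a' s) (h₂ : HasDerivAt φ₂ b' s) (i : Fin 3) :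
    HasDerivAt (fun t => spinorFrameNB (φ₁ t) (φ₂ t) i)
      (spinorFrameNBDeriv (φ₁ s) (φ₂ s) a' b' i) s := by
  fin_cases i
  · exact ((h₁.fun_pow 2).fun_sub (h₂.fun_pow 2)).congr_deriv
      (by simp [spinorFrameNBDeriv]; ring)
  · exact (((h₁.fun_pow 2).fun_add (h₂.fun_pow 2)).const_mul I).congr_deriv
      (by simp [spinorFrameNBDeriv]; ring)
  · exact ((h₁.const_mul (-2)).fun_mul h₂).congr_deriv (by simp [spinorFrameNBDeriv]; ring)

theorem hasDerivAt_spinorFrameT (h₁ : HasDerivAt φ₁ a' s) (h₂ : HasDerivAt φ₂ b' s) (i : Fin 3) :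
    HasDerivAt (fun t => spinorFrameT (φ₁ t) (φ₂ t) i)
      (spinorFrameTDeriv (φ₁ s) (φ₂ s) a' b' i) s := by
  fin_cases i
  · exact (h₁.mul h₂.star).add (h₁.star.mul h₂)
  · exact ((h₂.star.mul h₁).sub (h₁.star.mul h₂)).const_mul I
  · simp only [Fin.reduceFinMk, spinorFrameT_two]
    exact (h₁.star.mul h₁).sub (h₂.star.mul h₂)

end Deriv

theorem spinorFrameNBDeriv_sub (a b a' b' u v : ℂ) :
    spinorFrameNBDeriv a b a' b' - spinorFrameNBDeriv a b u v =
      spinorFrameNBDeriv a b (a' - u) (b' - v) := by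
  ext i; fin_cases i <;> simp [spinorFrameNBDeriv] <;> ring

theorem spinorFrameNBDeriv_eq_zero_iff {a b u v : ℂ} (hab : a ≠ 0 ∨ b ≠ 0) :
    spinorFrameNBDeriv a b u v = 0 ↔ u = 0 ∧ v = 0 := by
  refine ⟨fun h => ?_, fun ⟨hu, hv⟩ => by
    ext i; fin_cases i <;> simp [spinorFrameNBDeriv, hu, hv]⟩
  have h₀ : a * u - b * v = 0 := by simpa [spinorFrameNBDeriv] using congrFun h 0
  have h₁ : a * u + b * v = 0 := by simpa [spinorFrameNBDeriv] using congrFun h 1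
  have h₂ : u * b + a * v = 0 := by simpa [spinorFrameNBDeriv] using congrFun h 2
  exact eq_zero_and_eq_zero_of_linear_mul_eq_zero hab (by linear_combination (h₀ + h₁) / 2)
    (by linear_combination (h₁ - h₀) / 2) (by linear_combination h₂)

theorem spinorFrameNBDeriv_spinorFrenet (κ τ : ℝ) (a b : ℂ) :
    spinorFrameNBDeriv a b (spinorFrenet κ τ a b).1 (spinorFrenet κ τ a b).2 =
      -(κ : ℂ) • spinorFrameT a b - (I * τ) • spinorFrameNB a b := by
  ext i; fin_cases i
  all_goals
    simp [spinorFrameNBDeriv, spinorFrameNB, spinorFrameT, spinorFrenet, ← mul_conj']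
    ring

theorem spinorFrameTDeriv_spinorFrenet (κ τ : ℝ) (a b : ℂ) :
    spinorFrameTDeriv a b (spinorFrenet κ τ a b).1 (spinorFrenet κ τ a b).2 =
      (κ : ℂ) • fun i => ((spinorFrameNB a b i).re : ℂ) := by
  ext i; fin_cases i
  all_goals
    simp [spinorFrameTDeriv, spinorFrameNB, spinorFrenet, re_eq_add_conj, map_ofNat]
    ring

theorem frenet_normal_binormal_iff (z : ℂ) (κ τ t n β : ℝ) :
    (z.re = -κ * t + τ * β ∧ z.im = -τ * n) ↔ z = -κ * t - I * τ * (n + I * β) := by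
  simp [Complex.ext_iff]

theorem frenet_iff_spinorFrenet {a b a' b' : ℂ} {κ τ : ℝ} {t n β : Fin 3 → ℝ}
    (hab : a ≠ 0 ∨ b ≠ 0) (hNB : ∀ i, (n i : ℂ) + I * β i = spinorFrameNB a b i)
    (hT : ∀ i, (t i : ℂ) = spinorFrameT a b i) :
    ((∀ i, (spinorFrameTDeriv a b a' b' i).re = κ * n i) ∧
      (∀ i, (spinorFrameNBDeriv a b a' b' i).re = -κ * t i + τ * β i) ∧
      (∀ i, (spinorFrameNBDeriv a b a' b' i).im = -τ * n i)) ↔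
    a' = (spinorFrenet κ τ a b).1 ∧ b' = (spinorFrenet κ τ a b).2 := by
  have hNB_iff : ((∀ i, (spinorFrameNBDeriv a b a' b' i).re = -κ * t i + τ * β i) ∧
      (∀ i, (spinorFrameNBDeriv a b a' b' i).im = -τ * n i)) ↔
      a' = (spinorFrenet κ τ a b).1 ∧ b' = (spinorFrenet κ τ a b).2 := by
    simp only [← forall_and, frenet_normal_binormal_iff, hNB, hT]
    rw [← sub_eq_zero (a := a'), ← sub_eq_zero (a := b'),
      ← spinorFrameNBDeriv_eq_zero_iff hab, ← spinorFrameNBDeriv_sub,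
      spinorFrameNBDeriv_spinorFrenet, sub_eq_zero, funext_iff]
    simp only [Pi.sub_apply, Pi.smul_apply, smul_eq_mul]
  refine ⟨fun h => hNB_iff.mp h.2, fun h => ⟨fun i => ?_, hNB_iff.mpr h⟩⟩
  obtain ⟨rfl, rfl⟩ := h
  simp [spinorFrameTDeriv_spinorFrenet, ← hNB i]

end SpinorFrame

/-- Spinor Frenet equation in an Abelian three-dimensional Lie group (τ_G = 0): the Frenet equations T′ = κN, N′ = −κT + τB, B′ = −τN hold iff φ′ = −i(τ/2)φ + (κ/2)φ̂. This recovers the spinor Frenet equation of Del Castillo and Barrales in Euclidean 3-space. -/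
theorem spinor_frenet_abelian (φ₁ φ₂ : ℝ → ℂ) (κ τ : ℝ → ℝ)
    (T N B : ℝ → Fin 3 → ℝ)
    (hd₁ : Differentiable ℝ φ₁) (hd₂ : Differentiable ℝ φ₂)
    (hunit : ∀ s, (starRingEnd ℂ) (φ₁ s) * φ₁ s + (starRingEnd ℂ) (φ₂ s) * φ₂ s = 1)
    (hNB : ∀ s i, (N s i : ℂ) + Complex.I * (B s i : ℂ) =
      ![φ₁ s ^ 2 - φ₂ s ^ 2, Complex.I * (φ₁ s ^ 2 + φ₂ s ^ 2),
        -2 * φ₁ s * φ₂ s] i)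
    (hT : ∀ s i, (T s i : ℂ) =
      ![φ₁ s * (starRingEnd ℂ) (φ₂ s) + (starRingEnd ℂ) (φ₁ s) * φ₂ s,
        Complex.I * ((starRingEnd ℂ) (φ₂ s) * φ₁ s - (starRingEnd ℂ) (φ₁ s) * φ₂ s),
        ((‖φ₁ s‖ ^ 2 - ‖φ₂ s‖ ^ 2 : ℝ) : ℂ)] i) :
    ((∀ s i, deriv (fun t => T t i) s = κ s * N s i) ∧
     (∀ s i, deriv (fun t => N t i) s = -(κ s) * T s i + (τ s) * B s i) ∧
     (∀ s i, deriv (fun t => B t i) s = -(τ s) * N s i)) ↔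
    ((∀ s, deriv φ₁ s =
        -Complex.I * ((τ s : ℝ) / 2) * φ₁ s + (κ s / 2) * (-(starRingEnd ℂ) (φ₂ s))) ∧
     (∀ s, deriv φ₂ s =
        -Complex.I * ((τ s : ℝ) / 2) * φ₂ s + (κ s / 2) * ((starRingEnd ℂ) (φ₁ s)))) := by
  have hne s : φ₁ s ≠ 0 ∨ φ₂ s ≠ 0 := by
    by_contra! h
    simpa [h.1, h.2] using hunit s
  have hTderiv s i := hasDerivAt_of_ofReal_eq_s12 (fun t => hT t i)
    (hasDerivAt_spinorFrameT (hd₁ s).hasDerivAt (hd₂ s).hasDerivAt i)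
  have hNBderiv s i := hasDerivAt_of_add_I_mul_eq (fun t => hNB t i)
    (hasDerivAt_spinorFrameNB (hd₁ s).hasDerivAt (hd₂ s).hasDerivAt i)
  simp only [(hTderiv _ _).deriv, (hNBderiv _ _).1.deriv, (hNBderiv _ _).2.deriv]
  rw [← forall_and, ← forall_and, ← forall_and]
  exact forall_congr' fun s => frenet_iff_spinorFrenet (hne s) (hNB s) (hT s)
end
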